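/- arXiv:2109.00851 — 2 statements merged into one kernel-verified Lean document; each statement's English description precedes it below -/
import Mathlib

section
/- Thomson's principle: on a finite connected weighted graph, for disjoint nonempty vertex sets A and B, the effective resistance satisfies R_μ(A,B) = min{ (1/2) Σ_{(x,y)∈E} f(x,y)² μ_{xy}^{-1} } over all unit flows f from A to B; in particular the minimum is attained. -/
open Classical

/-- Dirichlet energy of a potential on a finite weighted graph. -/
noncomputable def potEnergy {G : Type*} [Fintype G] (E : G → G → Prop)
    (μ : G → G → ℝ) (f : G → ℝ) : ℝ :=
  (1 / 2) * ∑ x : G, ∑ y : G, if E x y then (f x - f y) ^ 2 * μ x y else 0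

/-- Effective resistance `R(A,B) = (inf { energy f : f ≡ 1 on A, f ≡ 0 on B })⁻¹`. -/
noncomputable def gRes {G : Type*} [Fintype G] (E : G → G → Prop)
    (μ : G → G → ℝ) (A B : Set G) : ℝ :=
  (sInf {e : ℝ | ∃ f : G → ℝ, (∀ a ∈ A, f a = 1) ∧ (∀ b ∈ B, f b = 0) ∧
      e = potEnergy E μ f})⁻¹

/-- `f` is a unit flow from `A` to `B`: antisymmetric on edges, divergence free off
`A ∪ B`, with total flux `1` out of `A` and total flux `1` into `B`. -/
noncomputable def IsUnitFlow {G : Type*} [Fintype G] (E : G → G → Prop)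
    (f : G → G → ℝ) (A B : Set G) : Prop :=
  (∀ x y, E x y → f x y = - f y x) ∧
  (∀ x, x ∉ A ∪ B → (∑ y : G, if E x y then f x y else 0) = 0) ∧
  (∑ x : G, if x ∈ A then (∑ y : G, if E x y then f x y else 0) else 0) = 1 ∧
  (∑ x : G, if x ∈ B then (∑ y : G, if E x y then f x y else 0) else 0) = -1

/-- Flow energy `(1/2) Σ_{(x,y) ∈ E} f(x,y)² μ_{xy}⁻¹`. -/
noncomputable def flowEnergy {G : Type*} [Fintype G] (E : G → G → Prop)
    (μ : G → G → ℝ) (f : G → G → ℝ) : ℝ :=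
  (1 / 2) * ∑ x : G, ∑ y : G, if E x y then f x y ^ 2 * (μ x y)⁻¹ else 0

/-- Summation by parts for skew-symmetric flows. -/
lemma tp_sum_by_parts {G : Type*} [Fintype G] (E : G → G → Prop)
    (hsymmE : ∀ x y, E x y → E y x)
    (j : G → G → ℝ) (hskew : ∀ x y, E x y → j x y = - j y x) (g : G → ℝ) :
    ∑ x : G, ∑ y : G, (if E x y then (g x - g y) * j x y else 0) =
      2 * ∑ x : G, g x * (∑ y : G, if E x y then j x y else 0) := by
  have key : (∑ x : G, ∑ y : G, if E x y then g y * j x y else 0)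
      = - ∑ x : G, ∑ y : G, (if E x y then g x * j x y else 0) := by
    rw [Finset.sum_comm, ← Finset.sum_neg_distrib]
    refine Finset.sum_congr rfl fun x _ => ?_
    rw [← Finset.sum_neg_distrib]
    refine Finset.sum_congr rfl fun y _ => ?_
    by_cases hxy : E x y
    · have h1 : E y x := hsymmE _ _ hxy
      rw [if_pos h1, if_pos hxy, hskew _ _ h1]
      ring
    · have h1 : ¬ E y x := fun hc => hxy (hsymmE _ _ hc)
      rw [if_neg h1, if_neg hxy, neg_zero]
  calc ∑ x : G, ∑ y : G, (if E x y then (g x - g y) * j x y else 0)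
      = ∑ x : G, ∑ y : G, ((if E x y then g x * j x y else 0)
          - (if E x y then g y * j x y else 0)) := by
        refine Finset.sum_congr rfl fun x _ => Finset.sum_congr rfl fun y _ => ?_
        by_cases hxy : E x y
        · rw [if_pos hxy, if_pos hxy, if_pos hxy]; ring
        · rw [if_neg hxy, if_neg hxy, if_neg hxy, sub_zero]
    _ = (∑ x : G, ∑ y : G, (if E x y then g x * j x y else 0))
          - ∑ x : G, ∑ y : G, (if E x y then g y * j x y else 0) := by
        simp [Finset.sum_sub_distrib]
    _ = 2 * ∑ x : G, ∑ y : G, (if E x y then g x * j x y else 0) := by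
        rw [key]; ring
    _ = 2 * ∑ x : G, g x * (∑ y : G, if E x y then j x y else 0) := by
        refine congrArg _ (Finset.sum_congr rfl fun x _ => ?_)
        rw [Finset.mul_sum]
        exact Finset.sum_congr rfl fun y _ => by by_cases hxy : E x y <;> simp [hxy]

/-- The total divergence of a skew-symmetric flow is zero. -/
lemma tp_total_div {G : Type*} [Fintype G] (E : G → G → Prop)
    (hsymmE : ∀ x y, E x y → E y x)
    (j : G → G → ℝ) (hskew : ∀ x y, E x y → j x y = - j y x) :
    ∑ x : G, ∑ y : G, (if E x y then j x y else 0) = 0 := by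
  have key : (∑ x : G, ∑ y : G, if E x y then j x y else 0)
      = - ∑ x : G, ∑ y : G, (if E x y then j x y else 0) := by
    nth_rewrite 1 [Finset.sum_comm]
    rw [← Finset.sum_neg_distrib]
    refine Finset.sum_congr rfl fun x _ => ?_
    rw [← Finset.sum_neg_distrib]
    refine Finset.sum_congr rfl fun y _ => ?_
    by_cases hxy : E x y
    · have h1 : E y x := hsymmE _ _ hxy
      rw [if_pos h1, if_pos hxy, hskew _ _ h1]
    · have h1 : ¬ E y x := fun hc => hxy (hsymmE _ _ hc)
      rw [if_neg h1, if_neg hxy, neg_zero]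
  linarith

/-- Energy of a one-point perturbation of a potential. -/
lemma tp_pot_update {G : Type*} [Fintype G] (E : G → G → Prop)
    (μ : G → G → ℝ) (hsymmE : ∀ x y, E x y → E y x) (hμsymm : ∀ x y, μ x y = μ y x)
    (h : G → ℝ) (x0 : G) (t : ℝ) :
    potEnergy E μ (Function.update h x0 (h x0 + t)) =
      potEnergy E μ h
      + 2 * t * (∑ y ∈ Finset.univ.erase x0, if E x0 y then (h x0 - h y) * μ x0 y else 0)
      + t ^ 2 * (∑ y ∈ Finset.univ.erase x0, if E x0 y then μ x0 y else 0) := by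
  classical
  set g : G → ℝ := Function.update h x0 (h x0 + t) with hg
  have hgx0 : g x0 = h x0 + t := Function.update_self _ _ _
  have hgne : ∀ x, x ≠ x0 → g x = h x := fun x hx => Function.update_of_ne hx _ _
  set Tg : G → G → ℝ := fun x y => if E x y then (g x - g y) ^ 2 * μ x y else 0 with hTg
  set Th : G → G → ℝ := fun x y => if E x y then (h x - h y) ^ 2 * μ x y else 0 with hTh
  have main : ∑ x : G, ∑ y : G, (Tg x y - Th x y)
      = 2 * ∑ y ∈ Finset.univ.erase x0,
          (if E x0 y then (2 * t * (h x0 - h y) + t ^ 2) * μ x0 y else 0) := by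
    have hrow : ∀ x ∈ Finset.univ.erase x0,
        (∑ y : G, (Tg x y - Th x y)) = Tg x x0 - Th x x0 := by
      intro x hx
      have hxne : x ≠ x0 := Finset.ne_of_mem_erase hx
      refine Finset.sum_eq_single x0 (fun y _ hy => ?_) (fun habs => absurd (Finset.mem_univ x0) habs)
      rw [hTg, hTh]
      simp only [hgne x hxne, hgne y hy, sub_self]
    have hsplit : ∑ x : G, ∑ y : G, (Tg x y - Th x y)
        = (∑ y : G, (Tg x0 y - Th x0 y))
          + ∑ x ∈ Finset.univ.erase x0, (Tg x x0 - Th x x0) := by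
      rw [← Finset.add_sum_erase Finset.univ (fun x => ∑ y : G, (Tg x y - Th x y))
        (Finset.mem_univ x0)]
      exact congrArg _ (Finset.sum_congr rfl hrow)
    have hdiag : Tg x0 x0 - Th x0 x0 = 0 := by
      rw [hTg, hTh]; simp
    have hfirst : (∑ y : G, (Tg x0 y - Th x0 y))
        = ∑ y ∈ Finset.univ.erase x0,
            (if E x0 y then (2 * t * (h x0 - h y) + t ^ 2) * μ x0 y else 0) := by
      rw [← Finset.sum_erase (f := fun y => Tg x0 y - Th x0 y) Finset.univ hdiag]
      refine Finset.sum_congr rfl fun y hy => ?_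
      have hyne : y ≠ x0 := Finset.ne_of_mem_erase hy
      rw [hTg, hTh]
      simp only [hgx0, hgne y hyne]
      by_cases hxy : E x0 y
      · rw [if_pos hxy, if_pos hxy, if_pos hxy]; ring
      · rw [if_neg hxy, if_neg hxy, if_neg hxy, sub_zero]
    have hsecond : (∑ x ∈ Finset.univ.erase x0, (Tg x x0 - Th x x0))
        = ∑ y ∈ Finset.univ.erase x0,
            (if E x0 y then (2 * t * (h x0 - h y) + t ^ 2) * μ x0 y else 0) := by
      refine Finset.sum_congr rfl fun x hx => ?_
      have hxne : x ≠ x0 := Finset.ne_of_mem_erase hx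
      rw [hTg, hTh]
      simp only [hgx0, hgne x hxne]
      by_cases hxy : E x x0
      · have hxy' : E x0 x := hsymmE _ _ hxy
        rw [if_pos hxy, if_pos hxy, if_pos hxy', hμsymm x x0]
        ring
      · have hxy' : ¬ E x0 x := fun hc => hxy (hsymmE _ _ hc)
        rw [if_neg hxy, if_neg hxy, if_neg hxy', sub_zero]
    rw [hsplit, hfirst, hsecond]; ring
  have expand : ∑ y ∈ Finset.univ.erase x0,
      (if E x0 y then (2 * t * (h x0 - h y) + t ^ 2) * μ x0 y else 0)
      = 2 * t * (∑ y ∈ Finset.univ.erase x0, if E x0 y then (h x0 - h y) * μ x0 y else 0)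
        + t ^ 2 * (∑ y ∈ Finset.univ.erase x0, if E x0 y then μ x0 y else 0) := by
    rw [Finset.mul_sum, Finset.mul_sum, ← Finset.sum_add_distrib]
    refine Finset.sum_congr rfl fun y _ => ?_
    by_cases hxy : E x0 y
    · rw [if_pos hxy, if_pos hxy, if_pos hxy]; ring
    · rw [if_neg hxy, if_neg hxy, if_neg hxy]; ring
  have hsum : ∑ x : G, ∑ y : G, Tg x y = (∑ x : G, ∑ y : G, Th x y)
      + ∑ x : G, ∑ y : G, (Tg x y - Th x y) := by
    rw [← Finset.sum_add_distrib]
    refine Finset.sum_congr rfl fun x _ => ?_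
    rw [← Finset.sum_add_distrib]
    exact Finset.sum_congr rfl fun y _ => by ring
  show (1/2 : ℝ) * ∑ x : G, ∑ y : G, Tg x y = (1/2 : ℝ) * (∑ x : G, ∑ y : G, Th x y) + _ + _
  rw [hsum, main, expand]
  ring

/-- Existence of a minimizing potential. -/
lemma tp_exists_min {G : Type*} [Fintype G] (E : G → G → Prop)
    (μ : G → G → ℝ)
    (hpos : ∀ x y, E x y → 0 < μ x y)
    (A B : Set G) (hdisj : Disjoint A B) :
    ∃ h0 : G → ℝ, (∀ a ∈ A, h0 a = 1) ∧ (∀ b ∈ B, h0 b = 0) ∧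
      (∀ g : G → ℝ, (∀ a ∈ A, g a = 1) → (∀ b ∈ B, g b = 0) →
        potEnergy E μ h0 ≤ potEnergy E μ g) := by
  classical
  have hABne : ∀ x, x ∈ A → x ∉ B := fun x hx hxB => Set.disjoint_left.mp hdisj hx hxB
  set K : Set (G → ℝ) :=
    {f | (∀ a ∈ A, f a = 1) ∧ (∀ b ∈ B, f b = 0) ∧ ∀ x, f x ∈ Set.Icc (0:ℝ) 1} with hK
  have hKclosed : IsClosed K := by
    have c1 : IsClosed {f : G → ℝ | ∀ a ∈ A, f a = 1} := by
      have : {f : G → ℝ | ∀ a ∈ A, f a = 1} = ⋂ a ∈ A, {f : G → ℝ | f a = 1} := by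
        ext f; simp
      rw [this]
      exact isClosed_biInter fun a _ => isClosed_eq (continuous_apply a) continuous_const
    have c2 : IsClosed {f : G → ℝ | ∀ b ∈ B, f b = 0} := by
      have : {f : G → ℝ | ∀ b ∈ B, f b = 0} = ⋂ b ∈ B, {f : G → ℝ | f b = 0} := by
        ext f; simp
      rw [this]
      exact isClosed_biInter fun b _ => isClosed_eq (continuous_apply b) continuous_const
    have c3 : IsClosed {f : G → ℝ | ∀ x, f x ∈ Set.Icc (0:ℝ) 1} := by
      have : {f : G → ℝ | ∀ x, f x ∈ Set.Icc (0:ℝ) 1}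
          = ⋂ x : G, (fun f : G → ℝ => f x) ⁻¹' Set.Icc (0:ℝ) 1 := by
        ext f; simp [Set.mem_iInter]
      rw [this]
      exact isClosed_iInter fun x => (isClosed_Icc).preimage (continuous_apply x)
    have : K = {f : G → ℝ | ∀ a ∈ A, f a = 1} ∩
        ({f : G → ℝ | ∀ b ∈ B, f b = 0} ∩ {f : G → ℝ | ∀ x, f x ∈ Set.Icc (0:ℝ) 1}) := by
      ext f; simp [hK, Set.mem_inter_iff, and_assoc]
    rw [this]
    exact c1.inter (c2.inter c3)
  have hKcompact : IsCompact K := by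
    have h1 : IsCompact (Set.pi Set.univ fun _ : G => Set.Icc (0:ℝ) 1) :=
      isCompact_univ_pi fun _ => isCompact_Icc
    exact h1.of_isClosed_subset hKclosed fun f hf x _ => hf.2.2 x
  have hKne : K.Nonempty := by
    refine ⟨fun x => if x ∈ A then 1 else 0, fun a ha => if_pos ha,
      fun b hb => if_neg (fun h => hABne b h hb), fun x => ?_⟩
    by_cases hx : x ∈ A <;> simp [hx]
  have hcont : Continuous fun f : G → ℝ => potEnergy E μ f := by
    unfold potEnergy
    refine continuous_const.mul ?_
    refine continuous_finset_sum _ fun x _ => continuous_finset_sum _ fun y _ => ?_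
    by_cases hxy : E x y
    · simp only [if_pos hxy]
      fun_prop
    · simp only [if_neg hxy]
      exact continuous_const
  obtain ⟨h0, h0K, h0min⟩ := hKcompact.exists_isMinOn hKne hcont.continuousOn
  obtain ⟨h0A, h0B, h0I⟩ := h0K
  refine ⟨h0, h0A, h0B, fun g hgA hgB => ?_⟩
  have clamp_sq : ∀ a b : ℝ, (min 1 (max 0 a) - min 1 (max 0 b))^2 ≤ (a-b)^2 := by
    intro a b
    simp only [min_def, max_def]
    split_ifs <;> nlinarith
  set g' : G → ℝ := fun x => min 1 (max 0 (g x)) with hg'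
  have hg'K : g' ∈ K := by
    exact ⟨fun a ha => by simp [hg', hgA a ha], fun b hb => by simp [hg', hgB b hb],
      fun x => ⟨le_min (by norm_num) (le_max_left 0 (g x)), min_le_left _ _⟩⟩
  have hle : potEnergy E μ g' ≤ potEnergy E μ g := by
    unfold potEnergy
    have hs : (∑ x : G, ∑ y : G, if E x y then (g' x - g' y) ^ 2 * μ x y else 0)
        ≤ ∑ x : G, ∑ y : G, if E x y then (g x - g y) ^ 2 * μ x y else 0 := by
      refine Finset.sum_le_sum fun x _ => Finset.sum_le_sum fun y _ => ?_
      by_cases hxy : E x y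
      · rw [if_pos hxy, if_pos hxy]
        exact mul_le_mul_of_nonneg_right (clamp_sq _ _) (hpos _ _ hxy).le
      · rw [if_neg hxy, if_neg hxy]
    linarith
  exact le_trans (h0min hg'K) hle

/-- **Thomson's principle.** On a finite connected weighted graph and for
disjoint nonempty vertex sets `A`, `B`, the effective resistance equals the minimum of
the flow energy `(1/2) Σ f(x,y)² μ_{xy}⁻¹` over all unit flows from `A` to `B`, and the
minimum is attained. -/
theorem stmt_9 {G : Type*} [Fintype G] (E : G → G → Prop)
    (μ : G → G → ℝ)
    (hsymmE : ∀ x y, E x y → E y x)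
    (hpos : ∀ x y, E x y → 0 < μ x y)
    (hμsymm : ∀ x y, μ x y = μ y x)
    (hconn : ∀ x y : G, Relation.ReflTransGen E x y)
    (A B : Set G) (hA : A.Nonempty) (hB : B.Nonempty) (hdisj : Disjoint A B) :
    ∃ f₀ : G → G → ℝ, IsUnitFlow E f₀ A B ∧
      flowEnergy E μ f₀ = gRes E μ A B ∧
      ∀ f : G → G → ℝ, IsUnitFlow E f A B → gRes E μ A B ≤ flowEnergy E μ f := by
  classical
  obtain ⟨a0, ha0⟩ := hA
  obtain ⟨b0, hb0⟩ := hB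
  obtain ⟨h0, h0A, h0B, hglob⟩ := tp_exists_min E μ hpos A B hdisj
  set D : ℝ := potEnergy E μ h0 with hD
  -- nonnegativity of energies
  have hpotnn : ∀ f : G → ℝ, 0 ≤ potEnergy E μ f := by
    intro f
    have hs : 0 ≤ ∑ x : G, ∑ y : G, (if E x y then (f x - f y) ^ 2 * μ x y else 0) := by
      refine Finset.sum_nonneg fun x _ => Finset.sum_nonneg fun y _ => ?_
      by_cases hxy : E x y
      · rw [if_pos hxy]; exact mul_nonneg (sq_nonneg _) (hpos _ _ hxy).le
      · rw [if_neg hxy]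
    unfold potEnergy
    linarith
  -- the set of potential energies
  set S : Set ℝ := {e : ℝ | ∃ f : G → ℝ, (∀ a ∈ A, f a = 1) ∧ (∀ b ∈ B, f b = 0) ∧
      e = potEnergy E μ f} with hS
  have hSne : S.Nonempty := ⟨D, h0, h0A, h0B, hD⟩
  have hSbdd : BddBelow S := by
    refine ⟨0, fun e he => ?_⟩
    obtain ⟨f, _, _, hef⟩ := he
    exact hef ▸ hpotnn f
  have hDS : D ∈ S := ⟨h0, h0A, h0B, hD⟩
  have hinf : sInf S = D := by
    refine le_antisymm (csInf_le hSbdd hDS) (le_csInf hSne ?_)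
    rintro e ⟨f, hfA, hfB, rfl⟩
    exact hglob f hfA hfB
  have hgres : gRes E μ A B = D⁻¹ := by
    unfold gRes
    rw [← hS, hinf]
  -- positivity of D
  have hDnn : 0 ≤ D := hpotnn h0
  have hbase : ∑ x : G, ∑ y : G, (if E x y then (h0 x - h0 y) ^ 2 * μ x y else 0) = 2 * D := by
    rw [hD]; unfold potEnergy; ring
  have hDne : D ≠ 0 := by
    intro hD0
    have hsum0 : ∑ x : G, ∑ y : G, (if E x y then (h0 x - h0 y) ^ 2 * μ x y else 0) = 0 := by
      rw [hbase, hD0, mul_zero]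
    have hinnn : ∀ x : G, (0:ℝ) ≤ ∑ y : G, (if E x y then (h0 x - h0 y) ^ 2 * μ x y else 0) := by
      intro x
      refine Finset.sum_nonneg fun y _ => ?_
      by_cases hxy : E x y
      · rw [if_pos hxy]; exact mul_nonneg (sq_nonneg _) (hpos _ _ hxy).le
      · rw [if_neg hxy]
    have hedge : ∀ x y, E x y → h0 x = h0 y := by
      intro x y hxy
      have hx := (Finset.sum_eq_zero_iff_of_nonneg (fun x _ => hinnn x)).mp hsum0 x
        (Finset.mem_univ x)
      have htnn : ∀ y' ∈ Finset.univ, (0:ℝ) ≤ if E x y' then (h0 x - h0 y') ^ 2 * μ x y' else 0 := by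
        intro y' _
        by_cases hxy' : E x y'
        · rw [if_pos hxy']; exact mul_nonneg (sq_nonneg _) (hpos _ _ hxy').le
        · rw [if_neg hxy']
      have hy := (Finset.sum_eq_zero_iff_of_nonneg htnn).mp hx y (Finset.mem_univ y)
      rw [if_pos hxy] at hy
      have hμne : μ x y ≠ 0 := (hpos _ _ hxy).ne'
      have : (h0 x - h0 y) ^ 2 = 0 := by
        rcases mul_eq_zero.mp hy with h | h
        · exact h
        · exact absurd h hμne
      have := pow_eq_zero_iff (n := 2) (by norm_num) |>.mp this
      linarith [this]
    have hRT : ∀ x y : G, Relation.ReflTransGen E x y → h0 x = h0 y := by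
      intro x y hxy
      induction hxy with
      | refl => rfl
      | tail hR hstep ih => exact ih.trans (hedge _ _ hstep)
    have h10 : (1:ℝ) = 0 := by
      rw [← h0A a0 ha0, ← h0B b0 hb0]
      exact hRT a0 b0 (hconn a0 b0)
    norm_num at h10
  have hDpos : 0 < D := lt_of_le_of_ne hDnn (Ne.symm hDne)
  -- harmonicity of the minimizer off A ∪ B
  have hharm : ∀ x0, x0 ∉ A ∪ B →
      (∑ y : G, if E x0 y then (h0 x0 - h0 y) * μ x0 y else 0) = 0 := by
    intro x0 hx0
    have hx0A : x0 ∉ A := fun h => hx0 (Or.inl h)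
    have hx0B : x0 ∉ B := fun h => hx0 (Or.inr h)
    set d : ℝ := ∑ y ∈ Finset.univ.erase x0,
      (if E x0 y then (h0 x0 - h0 y) * μ x0 y else 0) with hd
    set m : ℝ := ∑ y ∈ Finset.univ.erase x0, (if E x0 y then μ x0 y else 0) with hm
    have hmnn : 0 ≤ m := by
      rw [hm]
      refine Finset.sum_nonneg fun y _ => ?_
      by_cases hxy : E x0 y
      · rw [if_pos hxy]; exact (hpos _ _ hxy).le
      · rw [if_neg hxy]
    have hq : ∀ t : ℝ, 0 ≤ 2 * t * d + t ^ 2 * m := by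
      intro t
      have hge := hglob (Function.update h0 x0 (h0 x0 + t))
        (fun a ha => by
          rw [Function.update_of_ne (fun hax : a = x0 => hx0A (hax ▸ ha))]
          exact h0A a ha)
        (fun b hb => by
          rw [Function.update_of_ne (fun hbx : b = x0 => hx0B (hbx ▸ hb))]
          exact h0B b hb)
      rw [tp_pot_update E μ hsymmE hμsymm h0 x0 t, ← hd, ← hm, ← hD] at hge
      linarith
    have hd0 : d = 0 := by
      have hm1 : (0:ℝ) < m + 1 := by linarith
      have key := hq (-d / (m + 1))
      have hexp : 2 * (-d / (m + 1)) * d + (-d / (m + 1)) ^ 2 * m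
          = -(d ^ 2 * (m + 2)) / (m + 1) ^ 2 := by
        field_simp
        ring
      rw [hexp] at key
      have hsq : d ^ 2 = 0 := by
        have hnum : 0 ≤ -(d ^ 2 * (m + 2)) := by
          have := (le_div_iff₀ (by positivity : (0:ℝ) < (m + 1) ^ 2)).mp key
          linarith [this]
        nlinarith [sq_nonneg d]
      have := pow_eq_zero_iff (n := 2) (by norm_num) |>.mp hsq
      exact this
    have hzero : (fun y => if E x0 y then (h0 x0 - h0 y) * μ x0 y else 0) x0 = 0 := by
      by_cases hxy : E x0 x0 <;> simp [hxy]
    rw [← Finset.sum_erase (f := fun y => if E x0 y then (h0 x0 - h0 y) * μ x0 y else 0)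
      Finset.univ hzero]
    rw [← hd] at *
    exact hd0
  -- the current flow
  set F : G → G → ℝ := fun x y => if E x y then (h0 x - h0 y) * μ x y * D⁻¹ else 0 with hF
  have hFskew : ∀ x y, E x y → F x y = - F y x := by
    intro x y hxy
    have hyx := hsymmE _ _ hxy
    simp only [hF, if_pos hxy, if_pos hyx]
    rw [hμsymm x y]
    ring
  have hFdiv : ∀ x : G, (∑ y : G, if E x y then F x y else 0)
      = (∑ y : G, if E x y then (h0 x - h0 y) * μ x y else 0) * D⁻¹ := by
    intro x
    rw [Finset.sum_mul]
    refine Finset.sum_congr rfl fun y _ => ?_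
    by_cases hxy : E x y
    · simp only [hF, if_pos hxy]
    · simp only [hF, if_neg hxy, zero_mul]
  have hFdivfree : ∀ x, x ∉ A ∪ B → (∑ y : G, if E x y then F x y else 0) = 0 := by
    intro x hx
    rw [hFdiv x, hharm x hx, zero_mul]
  -- generic reduction of Σ h0·div to the A-flux
  have hdivsum : ∀ j : G → G → ℝ,
      (∀ x, x ∉ A ∪ B → (∑ y : G, if E x y then j x y else 0) = 0) →
      ∑ x : G, h0 x * (∑ y : G, if E x y then j x y else 0)
      = ∑ x : G, (if x ∈ A then (∑ y : G, if E x y then j x y else 0) else 0) := by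
    intro j hj
    refine Finset.sum_congr rfl fun x _ => ?_
    by_cases hxA : x ∈ A
    · rw [if_pos hxA, h0A x hxA, one_mul]
    · rw [if_neg hxA]
      by_cases hxB : x ∈ B
      · rw [h0B x hxB, zero_mul]
      · rw [hj x (by simp [hxA, hxB]), mul_zero]
  -- the key identity for F
  have key1 := tp_sum_by_parts E hsymmE F hFskew h0
  have hLHS : ∑ x : G, ∑ y : G, (if E x y then (h0 x - h0 y) * F x y else 0) = 2 := by
    have hptw : ∀ x y : G, (if E x y then (h0 x - h0 y) * F x y else 0)
        = (if E x y then (h0 x - h0 y) ^ 2 * μ x y else 0) * D⁻¹ := by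
      intro x y
      by_cases hxy : E x y
      · simp only [hF, if_pos hxy]; ring
      · simp only [hF, if_neg hxy, zero_mul]
    have hsum : ∑ x : G, ∑ y : G, (if E x y then (h0 x - h0 y) * F x y else 0)
        = (∑ x : G, ∑ y : G, (if E x y then (h0 x - h0 y) ^ 2 * μ x y else 0)) * D⁻¹ := by
      rw [Finset.sum_mul]
      refine Finset.sum_congr rfl fun x _ => ?_
      rw [Finset.sum_mul]
      exact Finset.sum_congr rfl fun y _ => hptw x y
    rw [hsum, hbase]
    field_simp
  have hfluxA : ∑ x : G, (if x ∈ A then (∑ y : G, if E x y then F x y else 0) else 0) = 1 := by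
    rw [hLHS, hdivsum F hFdivfree] at key1
    linarith
  have hfluxB : ∑ x : G, (if x ∈ B then (∑ y : G, if E x y then F x y else 0) else 0) = -1 := by
    have htot := tp_total_div E hsymmE F hFskew
    have hsplit : ∑ x : G, (∑ y : G, if E x y then F x y else 0)
        = (∑ x : G, (if x ∈ A then (∑ y : G, if E x y then F x y else 0) else 0))
          + ∑ x : G, (if x ∈ B then (∑ y : G, if E x y then F x y else 0) else 0) := by
      rw [← Finset.sum_add_distrib]
      refine Finset.sum_congr rfl fun x _ => ?_
      by_cases hxA : x ∈ A
      · have hxB : x ∉ B := Set.disjoint_left.mp hdisj hxA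
        rw [if_pos hxA, if_neg hxB, add_zero]
      · rw [if_neg hxA]
        by_cases hxB : x ∈ B
        · rw [if_pos hxB, zero_add]
        · rw [if_neg hxB, add_zero, hFdivfree x (by simp [hxA, hxB])]
    rw [htot, hfluxA] at hsplit
    linarith
  have hFunit : IsUnitFlow E F A B := ⟨hFskew, hFdivfree, hfluxA, hfluxB⟩
  -- energy of the current flow
  have hFenergy : flowEnergy E μ F = D⁻¹ := by
    have hptw : ∀ x y : G, (if E x y then F x y ^ 2 * (μ x y)⁻¹ else 0)
        = (if E x y then (h0 x - h0 y) ^ 2 * μ x y else 0) * (D⁻¹ * D⁻¹) := by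
      intro x y
      by_cases hxy : E x y
      · simp only [hF, if_pos hxy]
        have hμne : μ x y ≠ 0 := (hpos _ _ hxy).ne'
        field_simp
      · simp only [hF, if_neg hxy, zero_mul]
    have hsum : ∑ x : G, ∑ y : G, (if E x y then F x y ^ 2 * (μ x y)⁻¹ else 0)
        = (∑ x : G, ∑ y : G, (if E x y then (h0 x - h0 y) ^ 2 * μ x y else 0)) * (D⁻¹ * D⁻¹) := by
      rw [Finset.sum_mul]
      refine Finset.sum_congr rfl fun x _ => ?_
      rw [Finset.sum_mul]
      exact Finset.sum_congr rfl fun y _ => hptw x y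
    unfold flowEnergy
    rw [hsum, hbase]
    field_simp
  refine ⟨F, hFunit, by rw [hFenergy, hgres], ?_⟩
  -- lower bound: Thomson's principle inequality
  intro f hf
  obtain ⟨hfskew, hfdivfree, hffluxA, hffluxB⟩ := hf
  have key2 : ∑ x : G, ∑ y : G, (if E x y then (h0 x - h0 y) * f x y else 0) = 2 := by
    rw [tp_sum_by_parts E hsymmE f hfskew h0, hdivsum f hfdivfree, hffluxA]
    norm_num
  -- Cauchy–Schwarz
  set a : G × G → ℝ :=
    fun p => if E p.1 p.2 then (h0 p.1 - h0 p.2) * Real.sqrt (μ p.1 p.2) else 0 with ha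
  set b : G × G → ℝ :=
    fun p => if E p.1 p.2 then f p.1 p.2 * (Real.sqrt (μ p.1 p.2))⁻¹ else 0 with hb
  have hab : ∑ p : G × G, a p * b p = 2 := by
    rw [← key2, Fintype.sum_prod_type]
    refine Finset.sum_congr rfl fun x _ => Finset.sum_congr rfl fun y _ => ?_
    by_cases hxy : E x y
    · simp only [ha, hb, if_pos hxy]
      have hsq : Real.sqrt (μ x y) ≠ 0 := (Real.sqrt_pos.mpr (hpos _ _ hxy)).ne'
      field_simp
    · simp only [ha, hb, if_neg hxy, mul_zero]
  have ha2 : ∑ p : G × G, a p ^ 2 = 2 * D := by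
    rw [← hbase, Fintype.sum_prod_type]
    refine Finset.sum_congr rfl fun x _ => Finset.sum_congr rfl fun y _ => ?_
    by_cases hxy : E x y
    · simp only [ha, if_pos hxy]
      rw [mul_pow, Real.sq_sqrt (hpos _ _ hxy).le]
    · simp only [ha, if_neg hxy]
      norm_num
  have hb2 : ∑ p : G × G, b p ^ 2
      = ∑ x : G, ∑ y : G, (if E x y then f x y ^ 2 * (μ x y)⁻¹ else 0) := by
    rw [Fintype.sum_prod_type]
    refine Finset.sum_congr rfl fun x _ => Finset.sum_congr rfl fun y _ => ?_
    by_cases hxy : E x y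
    · simp only [hb, if_pos hxy]
      rw [mul_pow, inv_pow, Real.sq_sqrt (hpos _ _ hxy).le]
    · simp only [hb, if_neg hxy]
      norm_num
  have hcs := Finset.sum_mul_sq_le_sq_mul_sq Finset.univ a b
  rw [hab, ha2] at hcs
  have hflow : flowEnergy E μ f
      = (1/2 : ℝ) * ∑ p : G × G, b p ^ 2 := by
    unfold flowEnergy
    rw [hb2]
  have hbnn : 0 ≤ ∑ p : G × G, b p ^ 2 := Finset.sum_nonneg fun p _ => sq_nonneg _
  have hkey : 1 ≤ D * flowEnergy E μ f := by
    rw [hflow]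
    nlinarith [hcs, hDpos]
  rw [hgres]
  have hFlnn : 0 ≤ flowEnergy E μ f := by rw [hflow]; linarith
  calc D⁻¹ = D⁻¹ * 1 := by ring
    _ ≤ D⁻¹ * (D * flowEnergy E μ f) :=
        mul_le_mul_of_nonneg_left hkey (inv_nonneg.mpr hDnn)
    _ = flowEnergy E μ f := by
        field_simp
end

section
/- With f_* as above, for every m ≥ 1 there exists N(m) such that for every n ≥ N(m) there exists k with n ≤ k ≤ n + m and f_*(k) = f_*(k+1) = ... = f_*(k+m) (a run of at least m+1 equal values of f_* starting within distance m of n). -/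
open Classical

/-- `f_*(n) = 1` if `k(k²-1) < n ≤ k³` for some `k ∈ ℕ`, and `f_*(n) = 0` otherwise. -/
noncomputable def fstar (n : ℕ) : ℕ :=
  if ∃ k : ℕ, k * (k ^ 2 - 1) < n ∧ n ≤ k ^ 3 then 1 else 0

lemma fstar_eq_one {K j : ℕ} (h1 : K * (K ^ 2 - 1) < j) (h2 : j ≤ K ^ 3) : fstar j = 1 := by
  unfold fstar
  exact if_pos ⟨K, h1, h2⟩

lemma fstar_eq_zero {K j : ℕ} (h1 : K ^ 3 < j) (h2 : j ≤ (K + 1) * ((K + 1) ^ 2 - 1)) :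
    fstar j = 0 := by
  unfold fstar
  apply if_neg
  rintro ⟨k, hk1, hk2⟩
  rcases le_or_gt k K with h | h
  · exact absurd (hk2.trans (Nat.pow_le_pow_left h 3)) (not_le.2 h1)
  · have hmono : (K + 1) * ((K + 1) ^ 2 - 1) ≤ k * (k ^ 2 - 1) :=
      Nat.mul_le_mul h (Nat.sub_le_sub_right (Nat.pow_le_pow_left h 2) 1)
    omega

/-- For every `m ≥ 1` there exists `N(m)` such that for every
`n ≥ N(m)` there exists `k` with `n ≤ k ≤ n + m` and
`f_*(k) = f_*(k+1) = ⋯ = f_*(k+m)`. -/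
theorem stmt_14 : ∀ m : ℕ, 1 ≤ m → ∃ N : ℕ, ∀ n, N ≤ n →
    ∃ k : ℕ, n ≤ k ∧ k ≤ n + m ∧ ∀ i ≤ m, fstar (k + i) = fstar k := by
  intro m hm
  refine ⟨(m + 1) ^ 3 + 1, fun n hn => ?_⟩
  have hex : ∃ k : ℕ, n ≤ k ^ 3 := ⟨n, Nat.le_self_pow (by norm_num) n⟩
  set K := Nat.find hex with hKdef
  have hK : n ≤ K ^ 3 := Nat.find_spec hex
  have hKbig : m + 2 ≤ K := by
    by_contra hcon
    push_neg at hcon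
    have : K ^ 3 ≤ (m + 1) ^ 3 := Nat.pow_le_pow_left (by omega) 3
    omega
  have hK1 : 1 ≤ K := by omega
  have hprev : (K - 1) ^ 3 < n := by
    have := Nat.find_min hex (m := K - 1) (by omega)
    omega
  have h2 : 1 ≤ K ^ 2 := Nat.one_le_pow 2 K (by omega)
  have hKe : K * (K ^ 2 - 1) + K = K ^ 3 := by
    zify [h2]; ring
  have hKe2 : (K + 1) * ((K + 1) ^ 2 - 1) = K ^ 3 + 3 * K ^ 2 + 2 * K := by
    have e : (K + 1) ^ 2 - 1 = K ^ 2 + 2 * K := by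
      have : (K + 1) ^ 2 = K ^ 2 + 2 * K + 1 := by ring
      omega
    rw [e]; ring
  have hKsq : K ≤ K ^ 2 := Nat.le_self_pow (by norm_num) K
  rcases le_or_gt n (K * (K ^ 2 - 1)) with hA | hB
  · -- n is in the zero block ((K-1)³, K(K²-1)]
    have hprev' : (K - 1) ^ 3 < n := hprev
    have hKm1 : K - 1 + 1 = K := by omega
    rcases le_or_gt (n + m) (K * (K ^ 2 - 1)) with hA1 | hA2
    · refine ⟨n, le_refl n, by omega, fun i hi => ?_⟩
      have z0 : fstar n = 0 := fstar_eq_zero (K := K - 1) (by omega) (by rw [hKm1]; omega)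
      have zi : fstar (n + i) = 0 := fstar_eq_zero (K := K - 1) (by omega) (by rw [hKm1]; omega)
      rw [z0, zi]
    · refine ⟨K * (K ^ 2 - 1) + 1, by omega, by omega, fun i hi => ?_⟩
      have o0 : fstar (K * (K ^ 2 - 1) + 1) = 1 := fstar_eq_one (K := K) (by omega) (by omega)
      have oi : fstar (K * (K ^ 2 - 1) + 1 + i) = 1 := fstar_eq_one (K := K) (by omega) (by omega)
      rw [o0, oi]
  · -- n is in the one block (K(K²-1), K³]
    rcases le_or_gt (n + m) (K ^ 3) with hB1 | hB2
    · refine ⟨n, le_refl n, by omega, fun i hi => ?_⟩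
      have o0 : fstar n = 1 := fstar_eq_one (K := K) hB hK
      have oi : fstar (n + i) = 1 := fstar_eq_one (K := K) (by omega) (by omega)
      rw [o0, oi]
    · refine ⟨K ^ 3 + 1, by omega, by omega, fun i hi => ?_⟩
      have hKK : m + 1 ≤ 3 * K ^ 2 + 2 * K := by omega
      have z0 : fstar (K ^ 3 + 1) = 0 := fstar_eq_zero (K := K) (by omega) (by omega)
      have zi : fstar (K ^ 3 + 1 + i) = 0 := fstar_eq_zero (K := K) (by omega) (by omega)
      rw [z0, zi]
end
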